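/- In the polynomial ring ℚ[a₁,a₂,a₃,a₄,b₁,u₂,u₃] in seven variables, the ideal ⟨3b₁² − 4a₄, a₃, a₂, 2a₁ − 3b₁, b₁u₂, b₁(b₁ − 4u₃)⟩ equals the intersection of the two prime-component ideals J_C = ⟨b₁ − 4u₃, a₁ − 6u₃, a₂, a₃, a₄ − 12u₃², u₂⟩ and J_E = ⟨a₁, a₂, a₃, a₄, b₁⟩; moreover J_C + J_E = ⟨a₁, a₂, a₃, a₄, b₁, u₂, u₃⟩, so the two components meet in exactly one point. -/
import Mathlib


open MvPolynomial

-- Affine coordinates `a₁,a₂,a₃,a₄,b₁,u₂,u₃` on the chart `a₀ = b₀ = u₁ = 1`.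
noncomputable def a1 : MvPolynomial (Fin 7) ℚ := X 0
noncomputable def a2 : MvPolynomial (Fin 7) ℚ := X 1
noncomputable def a3 : MvPolynomial (Fin 7) ℚ := X 2
noncomputable def a4 : MvPolynomial (Fin 7) ℚ := X 3
noncomputable def b1 : MvPolynomial (Fin 7) ℚ := X 4
noncomputable def u2 : MvPolynomial (Fin 7) ℚ := X 5
noncomputable def u3 : MvPolynomial (Fin 7) ℚ := X 6

/-- The ideal of the curve `C` on the chart `a₀ = b₀ = u₁ = 1`. -/
noncomputable def JC : Ideal (MvPolynomial (Fin 7) ℚ) :=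
  Ideal.span ({b1 - 4 * u3, a1 - 6 * u3, a2, a3, a4 - 12 * u3 ^ 2, u2} :
    Set (MvPolynomial (Fin 7) ℚ))

/-- The ideal of the surface `E` on the chart `a₀ = b₀ = u₁ = 1`. -/
noncomputable def JE : Ideal (MvPolynomial (Fin 7) ℚ) :=
  Ideal.span ({a1, a2, a3, a4, b1} : Set (MvPolynomial (Fin 7) ℚ))

/- ### Auxiliary machinery -/

section Aux

variable {A : Type*} [CommRing A]

theorem combo2 (g1 g2 c1 c2 x : A) (h : c1*g1 + c2*g2 = x) :
    x ∈ Ideal.span ({g1, g2} : Set A) := by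
  subst h
  exact add_mem (Ideal.mul_mem_left _ _ (Ideal.subset_span (by simp)))
    (Ideal.mul_mem_left _ _ (Ideal.subset_span (by simp)))

theorem combo5 (g1 g2 g3 g4 g5 c1 c2 c3 c4 c5 x : A)
    (h : c1*g1 + c2*g2 + c3*g3 + c4*g4 + c5*g5 = x) :
    x ∈ Ideal.span ({g1, g2, g3, g4, g5} : Set A) := by
  subst h
  refine add_mem (add_mem (add_mem (add_mem ?_ ?_) ?_) ?_) ?_ <;>
    exact Ideal.mul_mem_left _ _ (Ideal.subset_span (by simp))

theorem combo6 (g1 g2 g3 g4 g5 g6 c1 c2 c3 c4 c5 c6 x : A)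
    (h : c1*g1 + c2*g2 + c3*g3 + c4*g4 + c5*g5 + c6*g6 = x) :
    x ∈ Ideal.span ({g1, g2, g3, g4, g5, g6} : Set A) := by
  subst h
  refine add_mem (add_mem (add_mem (add_mem (add_mem ?_ ?_) ?_) ?_) ?_) ?_ <;>
    exact Ideal.mul_mem_left _ _ (Ideal.subset_span (by simp))

theorem combo7 (g1 g2 g3 g4 g5 g6 g7 c1 c2 c3 c4 c5 c6 c7 x : A)
    (h : c1*g1 + c2*g2 + c3*g3 + c4*g4 + c5*g5 + c6*g6 + c7*g7 = x) :
    x ∈ Ideal.span ({g1, g2, g3, g4, g5, g6, g7} : Set A) := by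
  subst h
  refine add_mem (add_mem (add_mem (add_mem (add_mem (add_mem ?_ ?_) ?_) ?_) ?_) ?_) ?_ <;>
    exact Ideal.mul_mem_left _ _ (Ideal.subset_span (by simp))

end Aux

/-- Substitution retraction onto the subvariety cut out by the linear-type generators. -/
noncomputable def tphi : Fin 7 → MvPolynomial (Fin 7) ℚ :=
  ![C (3/2 : ℚ) * X 4, 0, 0, C (3/4 : ℚ) * X 4 ^ 2, X 4, X 5, X 6]

/-- Substitution sending `b₁ ↦ 4u₃`, `u₂ ↦ 0`. -/
noncomputable def tpsi : Fin 7 → MvPolynomial (Fin 7) ℚ :=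
  ![X 0, X 1, X 2, X 3, 4 * X 6, 0, X 6]

theorem sub_aeval_mem (t : Fin 7 → MvPolynomial (Fin 7) ℚ)
    (J : Ideal (MvPolynomial (Fin 7) ℚ))
    (h : ∀ i, (X i : MvPolynomial (Fin 7) ℚ) - t i ∈ J) (p : MvPolynomial (Fin 7) ℚ) :
    p - aeval t p ∈ J := by
  induction p using MvPolynomial.induction_on with
  | C a => simpa using J.zero_mem
  | add p q hp hq =>
      have e : p + q - aeval t (p + q) = (p - aeval t p) + (q - aeval t q) := by
        rw [map_add]; ring
      rw [e]; exact J.add_mem hp hq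
  | mul_X p i hp =>
      have e : p * X i - aeval t (p * X i) =
          p * (X i - t i) + (p - aeval t p) * t i := by
        rw [map_mul, aeval_X]; ring
      rw [e]
      exact J.add_mem (J.mul_mem_left p (h i)) (J.mul_mem_right (t i) hp)

/-- The reduced indeterminacy locus on the chart `a₀ = b₀ = u₁ = 1` decomposes
into the two components `C` and `E`, and these meet in exactly one point,
`(g, g', f) = (x₀², x₀x₁, x₀³)`. -/
theorem stmt16 :
    Ideal.span
        ({3 * b1 ^ 2 - 4 * a4, a3, a2, 2 * a1 - 3 * b1, b1 * u2,
          b1 * (b1 - 4 * u3)} : Set (MvPolynomial (Fin 7) ℚ)) = JC ⊓ JE ∧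
    JC + JE =
      Ideal.span ({a1, a2, a3, a4, b1, u2, u3} :
        Set (MvPolynomial (Fin 7) ℚ)) := by
  unfold JC JE a1 a2 a3 a4 b1 u2 u3
  set R := MvPolynomial (Fin 7) ℚ
  constructor
  · apply le_antisymm
    · -- generators of the reduced ideal lie in both `JC` and `JE`
      rw [Ideal.span_le]
      rintro x hx
      simp only [Set.mem_insert_iff, Set.mem_singleton_iff] at hx
      refine SetLike.mem_coe.mpr (Submodule.mem_inf.mpr ?_)
      rcases hx with rfl | rfl | rfl | rfl | rfl | rfl
      · exact ⟨combo6 _ _ _ _ _ _ (3*(X 4 + 4*X 6)) 0 0 0 (-4) 0 _ (by ring),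
          combo5 _ _ _ _ _ 0 0 0 (-4) (3*X 4) _ (by ring)⟩
      · exact ⟨combo6 _ _ _ _ _ _ 0 0 0 1 0 0 _ (by ring),
          combo5 _ _ _ _ _ 0 0 1 0 0 _ (by ring)⟩
      · exact ⟨combo6 _ _ _ _ _ _ 0 0 1 0 0 0 _ (by ring),
          combo5 _ _ _ _ _ 0 1 0 0 0 _ (by ring)⟩
      · exact ⟨combo6 _ _ _ _ _ _ (-3) 2 0 0 0 0 _ (by ring),
          combo5 _ _ _ _ _ 2 0 0 0 (-3) _ (by ring)⟩
      · exact ⟨combo6 _ _ _ _ _ _ 0 0 0 0 0 (X 4) _ (by ring),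
          combo5 _ _ _ _ _ 0 0 0 0 (X 5) _ (by ring)⟩
      · exact ⟨combo6 _ _ _ _ _ _ (X 4) 0 0 0 0 0 _ (by ring),
          combo5 _ _ _ _ _ 0 0 0 0 (X 4 - 4*X 6) _ (by ring)⟩
    · -- the intersection is contained in the reduced ideal
      intro p hp
      obtain ⟨hpC, hpE⟩ := Submodule.mem_inf.mp hp
      -- the reduced ideal, for brevity
      set I : Ideal R := Ideal.span
        ({3 * X 4 ^ 2 - 4 * X 3, X 2, X 1, 2 * X 0 - 3 * X 4, X 4 * X 5,
          X 4 * (X 4 - 4 * X 6)} : Set R) with hI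
      have hphi0 : aeval tphi (X 0 : R) = C (3/2 : ℚ) * X 4 := aeval_X _ _
      have hphi1 : aeval tphi (X 1 : R) = 0 := aeval_X _ _
      have hphi2 : aeval tphi (X 2 : R) = 0 := aeval_X _ _
      have hphi3 : aeval tphi (X 3 : R) = C (3/4 : ℚ) * X 4 ^ 2 := aeval_X _ _
      have hphi4 : aeval tphi (X 4 : R) = X 4 := aeval_X _ _
      have hphi5 : aeval tphi (X 5 : R) = X 5 := aeval_X _ _
      have hphi6 : aeval tphi (X 6 : R) = X 6 := aeval_X _ _
      have hKI : ∀ i, (X i : R) - tphi i ∈ I := by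
        intro i
        fin_cases i
        · show (X 0 : R) - C (3/2 : ℚ) * X 4 ∈ I
          exact combo6 _ _ _ _ _ _ 0 0 0 (C (1/2 : ℚ)) 0 0 _
            (by refine MvPolynomial.funext fun z => ?_; simp; ring)
        · show (X 1 : R) - 0 ∈ I
          exact combo6 _ _ _ _ _ _ 0 0 1 0 0 0 _ (by ring)
        · show (X 2 : R) - 0 ∈ I
          exact combo6 _ _ _ _ _ _ 0 1 0 0 0 0 _ (by ring)
        · show (X 3 : R) - C (3/4 : ℚ) * X 4 ^ 2 ∈ I
          exact combo6 _ _ _ _ _ _ (C (-1/4 : ℚ)) 0 0 0 0 0 _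
            (by refine MvPolynomial.funext fun z => ?_; simp; ring)
        · show (X 4 : R) - X 4 ∈ I
          rw [sub_self]; exact I.zero_mem
        · show (X 5 : R) - X 5 ∈ I
          rw [sub_self]; exact I.zero_mem
        · show (X 6 : R) - X 6 ∈ I
          rw [sub_self]; exact I.zero_mem
      have hpq : p - aeval tphi p ∈ I := sub_aeval_mem tphi I hKI p
      set q : R := aeval tphi p with hq
      -- the image of `p` lies in `(X 4)`
      have hqB : q ∈ Ideal.span ({X 4} : Set R) := by
        have hle : Ideal.map (aeval tphi) (Ideal.span ({X 0, X 1, X 2, X 3, X 4} : Set R)) ≤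
            Ideal.span ({X 4} : Set R) := by
          rw [Ideal.map_span, Ideal.span_le]
          rintro y ⟨g, hg, rfl⟩
          simp only [Set.mem_insert_iff, Set.mem_singleton_iff] at hg
          rcases hg with rfl | rfl | rfl | rfl | rfl
          · rw [hphi0]
            exact Ideal.mem_span_singleton'.mpr ⟨C (3/2 : ℚ), rfl⟩
          · rw [hphi1]; exact Ideal.zero_mem _
          · rw [hphi2]; exact Ideal.zero_mem _
          · rw [hphi3]
            exact Ideal.mem_span_singleton'.mpr ⟨C (3/4 : ℚ) * X 4, by ring⟩
          · rw [hphi4]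
            exact Ideal.mem_span_singleton'.mpr ⟨1, by ring⟩
        exact hle (Ideal.mem_map_of_mem _ hpE)
      -- the image of `p` lies in `(X 5, X 4 - 4 X 6)`
      have hqA : q ∈ Ideal.span ({X 5, X 4 - 4*X 6} : Set R) := by
        have hle : Ideal.map (aeval tphi)
            (Ideal.span ({X 4 - 4 * X 6, X 0 - 6 * X 6, X 1, X 2, X 3 - 12 * X 6 ^ 2, X 5} :
              Set R)) ≤ Ideal.span ({X 5, X 4 - 4*X 6} : Set R) := by
          rw [Ideal.map_span, Ideal.span_le]
          rintro y ⟨g, hg, rfl⟩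
          simp only [Set.mem_insert_iff, Set.mem_singleton_iff] at hg
          rcases hg with rfl | rfl | rfl | rfl | rfl | rfl <;>
            simp only [map_sub, map_mul, map_pow, map_ofNat, hphi0, hphi1, hphi2, hphi3,
              hphi4, hphi5, hphi6]
          · exact Ideal.mem_span_pair.mpr ⟨0, 1, by ring⟩
          · exact Ideal.mem_span_pair.mpr ⟨0, C (3/2 : ℚ),
              by refine MvPolynomial.funext fun z => ?_; simp; ring⟩
          · exact Ideal.zero_mem _
          · exact Ideal.zero_mem _
          · exact Ideal.mem_span_pair.mpr ⟨0, C (3/4 : ℚ) * (X 4 + 4*X 6),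
              by refine MvPolynomial.funext fun z => ?_; simp; ring⟩
          · exact Ideal.mem_span_pair.mpr ⟨1, 0, by ring⟩
        exact hle (Ideal.mem_map_of_mem _ hpC)
      obtain ⟨f, hf⟩ := Ideal.mem_span_singleton'.mp hqB
      have hpsi4 : aeval tpsi (X 4 : R) = 4 * X 6 := aeval_X _ _
      have hpsi5 : aeval tpsi (X 5 : R) = 0 := aeval_X _ _
      have hpsi6 : aeval tpsi (X 6 : R) = X 6 := aeval_X _ _
      -- applying `ψ` kills `q`
      have hψq : aeval tpsi q = 0 := by
        have hle : Ideal.map (aeval tpsi) (Ideal.span ({X 5, X 4 - 4*X 6} : Set R)) ≤ ⊥ := by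
          rw [Ideal.map_span, Ideal.span_le]
          rintro y ⟨g, hg, rfl⟩
          simp only [Set.mem_insert_iff, Set.mem_singleton_iff] at hg
          rcases hg with rfl | rfl
          · rw [hpsi5]; exact Ideal.zero_mem _
          · simp only [map_sub, map_mul, map_ofNat, hpsi4, hpsi6]
            rw [sub_self]; exact Ideal.zero_mem _
        exact Ideal.mem_bot.mp (hle (Ideal.mem_map_of_mem _ hqA))
      have hψf : aeval tpsi f = 0 := by
        have h4 : aeval tpsi f * (4 * X 6 : R) = 0 := by
          have h := congrArg (aeval tpsi) hf
          rw [map_mul, hpsi4, hψq] at h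
          exact h
        rcases mul_eq_zero.mp h4 with h | h
        · exact h
        · exact absurd h (mul_ne_zero (by norm_num) (X_ne_zero 6))
      have hfA : f ∈ Ideal.span ({X 5, X 4 - 4*X 6} : Set R) := by
        have hKψ : ∀ i, (X i : R) - tpsi i ∈ Ideal.span ({X 5, X 4 - 4*X 6} : Set R) := by
          intro i
          fin_cases i
          · show (X 0 : R) - X 0 ∈ _
            rw [sub_self]; exact Ideal.zero_mem _
          · show (X 1 : R) - X 1 ∈ _
            rw [sub_self]; exact Ideal.zero_mem _
          · show (X 2 : R) - X 2 ∈ _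
            rw [sub_self]; exact Ideal.zero_mem _
          · show (X 3 : R) - X 3 ∈ _
            rw [sub_self]; exact Ideal.zero_mem _
          · show (X 4 : R) - 4 * X 6 ∈ _
            exact Ideal.subset_span (by simp)
          · show (X 5 : R) - 0 ∈ _
            rw [sub_zero]; exact Ideal.subset_span (by simp)
          · show (X 6 : R) - X 6 ∈ _
            rw [sub_self]; exact Ideal.zero_mem _
        have h := sub_aeval_mem tpsi _ hKψ f
        rwa [hψf, sub_zero] at h
      obtain ⟨u, v, huv⟩ := Ideal.mem_span_pair.mp hfA
      have hqI : q ∈ I := by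
        refine combo6 _ _ _ _ _ _ 0 0 0 0 u v _ ?_
        rw [← hf, ← huv]; ring
      have hsplit : p = (p - q) + q := by ring
      rw [hsplit]
      exact I.add_mem hpq hqI
  · -- `JC + JE` is the maximal ideal of the origin-like point
    apply le_antisymm
    · rw [Ideal.add_eq_sup, sup_le_iff]
      constructor
      · rw [Ideal.span_le]
        rintro x hx
        simp only [Set.mem_insert_iff, Set.mem_singleton_iff] at hx
        rcases hx with rfl | rfl | rfl | rfl | rfl | rfl
        · exact combo7 _ _ _ _ _ _ _ 0 0 0 0 1 0 (-4) _ (by ring)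
        · exact combo7 _ _ _ _ _ _ _ 1 0 0 0 0 0 (-6) _ (by ring)
        · exact combo7 _ _ _ _ _ _ _ 0 1 0 0 0 0 0 _ (by ring)
        · exact combo7 _ _ _ _ _ _ _ 0 0 1 0 0 0 0 _ (by ring)
        · exact combo7 _ _ _ _ _ _ _ 0 0 0 1 0 0 (-12*X 6) _ (by ring)
        · exact combo7 _ _ _ _ _ _ _ 0 0 0 0 0 1 0 _ (by ring)
      · rw [Ideal.span_le]
        rintro x hx
        simp only [Set.mem_insert_iff, Set.mem_singleton_iff] at hx
        rcases hx with rfl | rfl | rfl | rfl | rfl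
        · exact combo7 _ _ _ _ _ _ _ 1 0 0 0 0 0 0 _ (by ring)
        · exact combo7 _ _ _ _ _ _ _ 0 1 0 0 0 0 0 _ (by ring)
        · exact combo7 _ _ _ _ _ _ _ 0 0 1 0 0 0 0 _ (by ring)
        · exact combo7 _ _ _ _ _ _ _ 0 0 0 1 0 0 0 _ (by ring)
        · exact combo7 _ _ _ _ _ _ _ 0 0 0 0 1 0 0 _ (by ring)
    · rw [Ideal.span_le]
      rintro x hx
      simp only [Set.mem_insert_iff, Set.mem_singleton_iff] at hx
      rw [Ideal.add_eq_sup]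
      rcases hx with rfl | rfl | rfl | rfl | rfl | rfl | rfl
      · exact Ideal.mem_sup_right (Ideal.subset_span (by simp))
      · exact Ideal.mem_sup_right (Ideal.subset_span (by simp))
      · exact Ideal.mem_sup_right (Ideal.subset_span (by simp))
      · exact Ideal.mem_sup_right (Ideal.subset_span (by simp))
      · exact Ideal.mem_sup_right (Ideal.subset_span (by simp))
      · exact Ideal.mem_sup_left (Ideal.subset_span (by simp))
      · have hX6 : (X 6 : MvPolynomial (Fin 7) ℚ) =
            C (-1/4 : ℚ) * (X 4 - 4 * X 6) + C (1/4 : ℚ) * X 4 := by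
          refine MvPolynomial.funext fun z => ?_
          simp; ring
        have h1 := add_mem
          (Ideal.mem_sup_left (Ideal.mul_mem_left _ (C (-1/4 : ℚ))
            (Ideal.subset_span (show (X 4 - 4 * X 6 : MvPolynomial (Fin 7) ℚ) ∈
              ({X 4 - 4 * X 6, X 0 - 6 * X 6, X 1, X 2, X 3 - 12 * X 6 ^ 2, X 5} :
                Set (MvPolynomial (Fin 7) ℚ)) by simp))))
          (Ideal.mem_sup_right (Ideal.mul_mem_left _ (C (1/4 : ℚ))
            (Ideal.subset_span (show (X 4 : MvPolynomial (Fin 7) ℚ) ∈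
              ({X 0, X 1, X 2, X 3, X 4} : Set (MvPolynomial (Fin 7) ℚ)) by simp))))
        rwa [← hX6] at h1
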